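/- arXiv:1506.01361 — 2 statements merged into one kernel-verified Lean document; each statement's English description precedes it below -/
import Mathlib

section
/- Let F be a 3×3 real matrix with det F > 0 and let λ, μ be real constants. Then the neo-Hookean free energy Ψ(F) = ½λ(ln det F)² + ½μ(F:F − 3 − 2 ln det F) is Fréchet differentiable at F, and its derivative applied to any 3×3 real matrix H equals P(F):H, where P(F) = λ ln(det F) F⁻ᵀ + μ(F − F⁻ᵀ) is the Piola–Kirchhoff stress. That is, the Piola–Kirchhoff stress is the gradient of the free energy with respect to the deformation gradient: P = ∂Ψ/∂F. -/
/-!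
The determinant is multilinear in the rows, so its derivative at `F` in the direction `H` is
`∑ i, det (F with row i replaced by Hᵢ) = tr (adj F · H)` (Jacobi's formula). By the chain rule
`d (ln det) = tr (F⁻¹ H) = F⁻ᵀ : H`, while `d (F : F) = 2 F : H`. Collecting terms gives `P(F) : H`.
-/

open Matrix

attribute [local instance] Matrix.normedAddCommGroup Matrix.normedSpace

namespace Matrix

theorem sum_det_updateRow {n R : Type*} [Fintype n] [DecidableEq n] [CommRing R]
    (A B : Matrix n n R) :
    ∑ i, (A.updateRow i (B i)).det = (A.adjugate * B).trace := by
  simp_rw [← cramer_transpose_apply, cramer_eq_adjugate_mulVec, ← adjugate_transpose,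
    trace, diag, mul_apply, mulVec, dotProduct, transpose_apply]
  exact Finset.sum_comm

variable {𝕜 n : Type*} [NontriviallyNormedField 𝕜] [Fintype n] [DecidableEq n]

noncomputable def detContinuousMultilinearMap :
    ContinuousMultilinearMap 𝕜 (fun _ : n => n → 𝕜) 𝕜 :=
  ⟨detRowAlternating.toMultilinearMap, continuous_id.matrix_det⟩

variable [CompleteSpace 𝕜]

noncomputable def frobeniusPairing : Matrix n n 𝕜 →L[𝕜] Matrix n n 𝕜 →L[𝕜] 𝕜 :=
  LinearMap.toContinuousLinearMap <| LinearMap.toContinuousLinearMap.toLinearMap ∘ₗ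
    LinearMap.mk₂ 𝕜 (fun A B => (Aᵀ * B).trace)
      (fun _ _ _ => by simp only [transpose_add, add_mul, trace_add])
      (fun _ _ _ => by simp only [transpose_smul, smul_mul, trace_smul])
      (fun _ _ _ => by simp only [mul_add, trace_add])
      (fun _ _ _ => by simp only [mul_smul_comm, trace_smul])

@[simp]
theorem frobeniusPairing_apply (A B : Matrix n n 𝕜) :
    frobeniusPairing A B = (Aᵀ * B).trace :=
  rfl

theorem frobeniusPairing_comm (A B : Matrix n n 𝕜) :
    frobeniusPairing A B = frobeniusPairing B A := by
  rw [frobeniusPairing_apply, frobeniusPairing_apply, ← trace_transpose, transpose_mul,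
    transpose_transpose]

/- `HasFDerivAt` produces continuous linear maps over the normed-space instances on matrices,
`frobeniusPairing` lives over the plain ones; they agree only up to unfolding, which is why
the derivatives below are identified with `change`, `rfl` and `exact` rather than `simp`. -/

theorem hasFDerivAt_det (F : Matrix n n 𝕜) :
    HasFDerivAt det (frobeniusPairing F.adjugateᵀ) F := by
  refine (detContinuousMultilinearMap.hasFDerivAt F).congr_fderiv <|
    ContinuousLinearMap.ext fun (H : Matrix n n 𝕜) => ?_
  refine (ContinuousMultilinearMap.linearDeriv_apply _ _ _).trans ?_
  change _ = (F.adjugateᵀᵀ * H).trace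
  rw [transpose_transpose, ← sum_det_updateRow]
  rfl

theorem hasFDerivAt_trace_transpose_mul_self (F : Matrix n n 𝕜) :
    HasFDerivAt (fun G : Matrix n n 𝕜 => (Gᵀ * G).trace) (frobeniusPairing ((2 : 𝕜) • F)) F := by
  refine (frobeniusPairing.hasFDerivAt_of_bilinear (hasFDerivAt_id F)
    (hasFDerivAt_id F)).congr_fderiv ?_
  ext1 H
  change frobeniusPairing F H + frobeniusPairing H F = _
  rw [frobeniusPairing_comm H F, two_smul, map_add]
  rfl

theorem hasFDerivAt_log_det {F : Matrix n n ℝ} (hF : F.det ≠ 0) :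
    HasFDerivAt (fun G : Matrix n n ℝ => Real.log G.det) (frobeniusPairing F⁻¹ᵀ) F := by
  refine ((Real.hasDerivAt_log hF).comp_hasFDerivAt F (hasFDerivAt_det F)).congr_fderiv ?_
  rw [inv_def, Ring.inverse_eq_inv', transpose_smul, map_smul]
  rfl

end Matrix

/-- The neo-Hookean free energy `Ψ(F) = ½λ(ln det F)² + ½μ(F:F − 3 − 2 ln det F)`
is Fréchet differentiable at any `F` with `det F > 0`, and its derivative applied
to `H` is `P(F):H`, where `P(F) = λ ln(det F) F⁻ᵀ + μ(F − F⁻ᵀ)` and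
`A:B = trace(Aᵀ·B)` is the Frobenius inner product. -/
theorem piola_kirchhoff_is_gradient_of_free_energy
    (F : Matrix (Fin 3) (Fin 3) ℝ) (hF : 0 < F.det) (lam mu : ℝ) :
    ∃ D : Matrix (Fin 3) (Fin 3) ℝ →L[ℝ] ℝ,
      HasFDerivAt
        (fun G : Matrix (Fin 3) (Fin 3) ℝ =>
          (1 / 2 : ℝ) * lam * (Real.log G.det) ^ 2 +
            (1 / 2 : ℝ) * mu * ((Gᵀ * G).trace - 3 - 2 * Real.log G.det))
        D F ∧
      ∀ H : Matrix (Fin 3) (Fin 3) ℝ,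
        D H = (((lam * Real.log F.det) • (F⁻¹)ᵀ + mu • (F - (F⁻¹)ᵀ))ᵀ * H).trace := by
  refine ⟨frobeniusPairing ((lam * Real.log F.det) • (F⁻¹)ᵀ + mu • (F - (F⁻¹)ᵀ)), ?_,
    fun _ => rfl⟩
  have hlog := hasFDerivAt_log_det hF.ne'
  have hΨ := ((hlog.pow 2).const_mul ((1 / 2 : ℝ) * lam)).add
    ((((hasFDerivAt_trace_transpose_mul_self F).sub_const 3).sub (hlog.const_mul 2)).const_mul
      ((1 / 2 : ℝ) * mu))
  have hD : (1 / 2 * lam) • (2 • Real.log F.det ^ (2 - 1)) • frobeniusPairing F⁻¹ᵀ +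
        (1 / 2 * mu) • (frobeniusPairing ((2 : ℝ) • F) - (2 : ℝ) • frobeniusPairing F⁻¹ᵀ) =
      frobeniusPairing ((lam * Real.log F.det) • (F⁻¹)ᵀ + mu • (F - (F⁻¹)ᵀ)) := by
    simp only [map_add, map_smul, map_sub]
    module
  exact hΨ.congr_fderiv hD
end

section
/- Let F be a 3×3 real matrix with det F > 0, let λ, μ be real constants, and for a 3×3 real matrix H define 𝔸(F)[H] = λ trace(F⁻¹·H) F⁻ᵀ − λ ln(det F) F⁻ᵀ·Hᵀ·F⁻ᵀ + μ(H + F⁻ᵀ·Hᵀ·F⁻ᵀ), the exact Piola stress tangent of the neo-Hookean model. Then 𝔸(F) possesses major symmetry with respect to the Frobenius inner product: for all 3×3 real matrices H and K, 𝔸(F)[H] : K = 𝔸(F)[K] : H. Consequently the tangent contribution ∫ Grad Φᴵ : 𝔸 : Grad Φᴶ dV to the finite element system matrix is symmetric in I and J, so the assembled matrix problem is symmetric. -/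
open Matrix

/-- The exact Piola stress tangent of the neo-Hookean model,
`𝔸(F)[H] = λ trace(F⁻¹·H) F⁻ᵀ − λ ln(det F) F⁻ᵀ·Hᵀ·F⁻ᵀ + μ(H + F⁻ᵀ·Hᵀ·F⁻ᵀ)`,
possesses major symmetry with respect to the Frobenius inner product
`A:B = trace(Aᵀ·B)`: for all `H`, `K` we have `𝔸(F)[H] : K = 𝔸(F)[K] : H`.
Hence the assembled finite element matrix problem is symmetric. -/
theorem piola_tangent_major_symmetry
    (F : Matrix (Fin 3) (Fin 3) ℝ) (hF : 0 < F.det) (lam mu : ℝ)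
    (𝔸 : Matrix (Fin 3) (Fin 3) ℝ → Matrix (Fin 3) (Fin 3) ℝ)
    (h𝔸 : ∀ H : Matrix (Fin 3) (Fin 3) ℝ,
      𝔸 H = (lam * (F⁻¹ * H).trace) • (F⁻¹)ᵀ
            - (lam * Real.log F.det) • ((F⁻¹)ᵀ * Hᵀ * (F⁻¹)ᵀ)
            + mu • (H + (F⁻¹)ᵀ * Hᵀ * (F⁻¹)ᵀ)) :
    ∀ H K : Matrix (Fin 3) (Fin 3) ℝ,
      ((𝔸 H)ᵀ * K).trace = ((𝔸 K)ᵀ * H).trace := by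
  intro H K
  have key : ∀ A B : Matrix (Fin 3) (Fin 3) ℝ,
      (((F⁻¹)ᵀ * Aᵀ * (F⁻¹)ᵀ)ᵀ * B).trace = ((F⁻¹ * A) * (F⁻¹ * B)).trace := by
    intro A B
    simp [Matrix.mul_assoc]
  have key2 : ((F⁻¹ * H) * (F⁻¹ * K)).trace = ((F⁻¹ * K) * (F⁻¹ * H)).trace :=
    Matrix.trace_mul_comm _ _
  have key3 : (Hᵀ * K).trace = (Kᵀ * H).trace := by
    rw [← Matrix.trace_transpose (Hᵀ * K), transpose_mul, transpose_transpose]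
  have key4 : (((F⁻¹)ᵀ)ᵀ * K).trace = (F⁻¹ * K).trace := by simp
  have key5 : (((F⁻¹)ᵀ)ᵀ * H).trace = (F⁻¹ * H).trace := by simp
  simp only [h𝔸, transpose_add, transpose_sub, transpose_smul, Matrix.add_mul,
    Matrix.sub_mul, Matrix.smul_mul, trace_add, trace_sub, trace_smul, key, key2, key3,
    key4, key5, smul_eq_mul]
  ring
end
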